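/- Let 0 ≤ k ≤ h−1 and let x ∈ ℂ satisfy x ≠ ±1/√d and d^{k+2}x^{2k+4} − d^{k+2}x^{2k+3} + dx − 1 = 0, and set λ = (d/(d+1))·(x + 1/(xd)). Let v be a vertex of T_h with ℓ(v) = h−1−k and let j ∈ {1,…,d−1}. Then the vector f_{v,j,j+1} : V(T_h) → ℂ defined by f_{v,j,j+1}(w) = d x^{i+2}/(dx² − 1) − 1/((dx² − 1) d^{i} x^{i}) for w ∈ T_j^v, f_{v,j,j+1}(w) = −d x^{i+2}/(dx² − 1) + 1/((dx² − 1) d^{i} x^{i}) for w ∈ T_{j+1}^v (in both cases i = ℓ(w) − h + k), and f_{v,j,j+1}(w) = 0 otherwise, is a nonzero vector satisfying Q_h f_{v,j,j+1} = λ f_{v,j,j+1}. -/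

import Mathlib

open Matrix

/-- Vertices of the complete `d`-ary tree of height `h`: words over `{0,…,d-1}`
of length at most `h` (encoded as a level `l ≤ h` together with a word of length `l`). -/
abbrev Vtx (d h : ℕ) : Type := Σ l : Fin (h + 1), Fin l.val → Fin d

/-- The word (from the root) corresponding to a vertex. -/
def toWord {d h : ℕ} (v : Vtx d h) : List (Fin d) := List.ofFn v.2

/-- The level of a vertex, i.e. its distance from the root. -/
def lvl {d h : ℕ} (v : Vtx d h) : ℕ := v.1.val

/-- Adjacency in the tree: one vertex is obtained from the other by appending one letter. -/
def adj {d h : ℕ} (v w : Vtx d h) : Prop :=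
  (∃ a : Fin d, toWord w = toWord v ++ [a]) ∨ ∃ a : Fin d, toWord v = toWord w ++ [a]

-- The transition matrix of the simple random walk on the complete `d`-ary tree of
-- height `h`: probability `1/(d+1)` along each edge, holding probability `1/(d+1)` at the
-- root and `d/(d+1)` at each leaf.
open scoped Classical in
noncomputable def Q (d h : ℕ) : Matrix (Vtx d h) (Vtx d h) ℂ := fun v w =>
  if adj v w then 1 / (d + 1)
  else if v = w ∧ lvl v = 0 then 1 / (d + 1)
  else if v = w ∧ lvl v = h then (d : ℂ) / (d + 1)
  else 0

/-- `inSub v c w` means that `w` belongs to the complete subtree `T_c^v` rooted at the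
child of `v` labelled `c`. -/
def inSub {d h : ℕ} (v : Vtx d h) (c : Fin d) (w : Vtx d h) : Prop :=
  (toWord v ++ [c]) <+: toWord w

/-- Value at depth `i` (below the relevant children of `v`) of the pseudo
anti-symmetric eigenvector: `d·x^{i+2}/(dx²−1) − 1/((dx²−1)·dⁱ·xⁱ)`. -/
noncomputable def yanti (d : ℕ) (x : ℂ) (i : ℕ) : ℂ :=
  (d : ℂ) * x ^ (i + 2) / (d * x ^ 2 - 1) - 1 / ((d * x ^ 2 - 1) * (d : ℂ) ^ i * x ^ i)

-- The pseudo anti-symmetric candidate eigenvector supported on the subtrees rooted at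
-- the children `c1` and `c2` of `v`, taking value `yanti d x i` with
-- `i = lvl w + k - h` on the first subtree and its negative on the second.
open scoped Classical in
noncomputable def fantiX (d h k : ℕ) (x : ℂ) (v : Vtx d h) (c1 c2 : Fin d) :
    Vtx d h → ℂ := fun w =>
  if inSub v c1 w then yanti d x (lvl w + k - h)
  else if inSub v c2 w then -yanti d x (lvl w + k - h)
  else 0

/-! A vector equal to `g i` at depth `i` in the subtree `T_{c₁}^v`, to `-g i` in `T_{c₂}^v` and
to `0` elsewhere is an eigenvector of `Q` with eigenvalue `μ/(d+1)` as soon as `g` vanishes at `v`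
and satisfies `g (i-1) + d g (i+1) = μ g i` in the interior and `g (i-1) + d g i = μ g i` at the
leaves: at `v` the two subtrees cancel, and away from them the vector and all its neighbours
vanish. For `μ = dx + 1/x` the interior recurrence is solved by every combination of `xⁱ` and
`(dx)⁻ⁱ`; the one vanishing at `v` is the profile `yanti` of `f`, and for it the leaf condition is
exactly the polynomial equation satisfied by `x`. Since `x ≠ ±1/√d`, the normalisation `dx² - 1`
is nonzero and the profile equals `1` just below `v`, so `f ≠ 0`. -/

namespace Vtx

variable {d h : ℕ}

lemma length_toWord (v : Vtx d h) : (toWord v).length = lvl v := by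
  simp [toWord, lvl]

lemma lvl_le (v : Vtx d h) : lvl v ≤ h :=
  Nat.lt_succ_iff.mp v.1.isLt

lemma toWord_injective : Function.Injective (toWord : Vtx d h → List (Fin d)) := by
  rintro ⟨l₁, f₁⟩ ⟨l₂, f₂⟩ hw
  obtain rfl : l₁ = l₂ := Fin.ext (by simpa [toWord] using congrArg List.length hw)
  simpa using List.ofFn_injective hw

-- Words longer than `h` are sent to the root.
def ofWord (l : List (Fin d)) : Vtx d h :=
  if hl : l.length ≤ h then ⟨⟨l.length, by omega⟩, fun i => l.get ⟨i.1, i.2⟩⟩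
  else ⟨0, Fin.elim0⟩

lemma toWord_ofWord {l : List (Fin d)} (hl : l.length ≤ h) :
    toWord (ofWord l : Vtx d h) = l := by
  rw [ofWord, dif_pos hl]
  exact List.ofFn_get l

def parent (w : Vtx d h) : Vtx d h := ofWord (toWord w).dropLast

def child (w : Vtx d h) (a : Fin d) : Vtx d h := ofWord (toWord w ++ [a])

lemma toWord_parent (w : Vtx d h) : toWord (parent w) = (toWord w).dropLast :=
  toWord_ofWord (by have := w.lvl_le; simp [length_toWord]; omega)

lemma lvl_parent (w : Vtx d h) : lvl (parent w) = lvl w - 1 := by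
  rw [← length_toWord, toWord_parent, List.length_dropLast, length_toWord]

lemma toWord_child {w : Vtx d h} (hw : lvl w < h) (a : Fin d) :
    toWord (child w a) = toWord w ++ [a] :=
  toWord_ofWord (by simpa [length_toWord] using hw)

lemma lvl_child {w : Vtx d h} (hw : lvl w < h) (a : Fin d) :
    lvl (child w a) = lvl w + 1 := by
  rw [← length_toWord, toWord_child hw, List.length_append, length_toWord, List.length_singleton]

lemma child_injective {w : Vtx d h} (hw : lvl w < h) : Function.Injective (child w) := by
  intro a b hab
  simpa [toWord_child hw] using congrArg toWord hab

lemma adj_iff {w w' : Vtx d h} :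
    adj w w' ↔ (1 ≤ lvl w ∧ w' = parent w) ∨ (lvl w < h ∧ ∃ a, w' = child w a) := by
  constructor
  · rintro (⟨a, ha⟩ | ⟨a, ha⟩)
    · have hlt : lvl w < h := by
        have := congrArg List.length ha
        simp only [length_toWord, List.length_append, List.length_singleton] at this
        have := w'.lvl_le
        omega
      exact Or.inr ⟨hlt, a, toWord_injective (by rw [toWord_child hlt, ha])⟩
    · have hpos : 1 ≤ lvl w := by
        have := congrArg List.length ha
        simp only [length_toWord, List.length_append, List.length_singleton] at this
        omega
      exact Or.inl ⟨hpos, toWord_injective (by simp [toWord_parent, ha])⟩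
  · rintro (⟨hpos, rfl⟩ | ⟨hlt, a, rfl⟩)
    · have hne : toWord w ≠ [] := by
        rw [← List.length_pos_iff, length_toWord]; omega
      exact Or.inr ⟨(toWord w).getLast hne, by
        rw [toWord_parent, List.dropLast_append_getLast hne]⟩
    · exact Or.inl ⟨a, toWord_child hlt a⟩

lemma not_adj_self (w : Vtx d h) : ¬ adj w w := by
  rintro (⟨a, ha⟩ | ⟨a, ha⟩) <;> simpa using congrArg List.length ha

end Vtx

section Walk

variable {d h : ℕ}

open Vtx

open scoped Classical in
lemma sum_ite_adj (f : Vtx d h → ℂ) (w : Vtx d h) :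
    ∑ w', (if adj w w' then f w' else 0)
      = (if 1 ≤ lvl w then f (parent w) else 0)
        + (if lvl w < h then ∑ a, f (child w a) else 0) := by
  have hsplit : ∀ w', (if adj w w' then f w' else 0)
      = (if 1 ≤ lvl w ∧ w' = parent w then f w' else 0)
        + (if lvl w < h ∧ ∃ a, w' = child w a then f w' else 0) := by
    intro w'
    have hexcl : ¬ ((1 ≤ lvl w ∧ w' = parent w) ∧ lvl w < h ∧ ∃ a, w' = child w a) := by
      rintro ⟨⟨-, rfl⟩, hlt, a, ha⟩
      have := congrArg lvl ha
      rw [lvl_parent, lvl_child hlt] at this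
      omega
    rw [adj_iff]
    split_ifs <;> first | tauto | simp
  rw [Finset.sum_congr rfl fun w' _ => hsplit w', Finset.sum_add_distrib]
  congr 1
  · split_ifs with hpos <;> simp [hpos]
  · split_ifs with hlt
    · refine (Fintype.sum_of_injective _ (child_injective hlt) _ _ ?_ fun a => ?_).symm
      · rintro w' hw'
        simp only [hlt, true_and]
        rw [if_neg fun ⟨a, ha⟩ => hw' ⟨a, ha.symm⟩]
      · simp [hlt]
    · simp [hlt]

open scoped Classical in
lemma Q_mulVec_apply (f : Vtx d h → ℂ) (w : Vtx d h) :
    (Q d h *ᵥ f) w = ((if 1 ≤ lvl w then f (parent w) else 0)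
      + (if lvl w < h then ∑ a, f (child w a) else 0)
      + (if lvl w = 0 then f w else if lvl w = h then d * f w else 0)) / (d + 1) := by
  have hentry : ∀ w', Q d h w w' * f w' = (if adj w w' then f w' else 0) / (d + 1)
      + if w' = w then (if lvl w = 0 then f w else if lvl w = h then d * f w else 0) / (d + 1)
        else 0 := by
    intro w'
    by_cases hadj : adj w w'
    · have hne : w' ≠ w := by rintro rfl; exact not_adj_self w' hadj
      simp [Q, hadj, hne, div_eq_inv_mul]
    · by_cases heq : w' = w
      · subst heq
        simp only [Q, hadj, if_false, true_and, zero_div, zero_add, if_true]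
        split_ifs <;> ring
      · simp [Q, hadj, heq, Ne.symm heq]
  rw [mulVec, dotProduct, Finset.sum_congr rfl fun w' _ => hentry w', Finset.sum_add_distrib,
    ← Finset.sum_div, sum_ite_adj, Finset.sum_ite_eq', if_pos (Finset.mem_univ w)]
  ring

end Walk

section Subtree

variable {d h : ℕ} {v w : Vtx d h} {c c₁ c₂ a : Fin d}

open Vtx

lemma lvl_lt_of_inSub (hs : inSub v c w) : lvl v < lvl w := by
  simpa [length_toWord] using hs.length_le

lemma not_inSub_self : ¬ inSub v c v := fun hs => (lt_irrefl _) (lvl_lt_of_inSub hs)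

lemma eq_of_inSub_of_inSub (h₁ : inSub v c₁ w) (h₂ : inSub v c₂ w) : c₁ = c₂ := by
  simpa using (List.prefix_of_prefix_length_le h₁ h₂ (by simp)).eq_of_length (by simp)

lemma inSub_child_self_iff (hv : lvl v < h) : inSub v c (child v a) ↔ a = c := by
  rw [inSub, toWord_child hv]
  constructor
  · intro hs
    simpa [eq_comm] using hs.eq_of_length (by simp)
  · rintro rfl
    exact List.prefix_refl _

lemma inSub_child (hs : inSub v c w) (hw : lvl w < h) (a : Fin d) : inSub v c (child w a) := by
  rw [inSub, toWord_child hw]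
  exact hs.trans (List.prefix_append _ _)

lemma inSub_or_eq_of_inSub_child (hw : lvl w < h) (hs : inSub v c (child w a)) :
    inSub v c w ∨ w = v := by
  rw [inSub, toWord_child hw] at hs
  rcases Nat.lt_or_ge (lvl v) (lvl w) with hlt | hge
  · refine Or.inl (List.prefix_of_prefix_length_le hs (List.prefix_append _ _) ?_)
    simpa [length_toWord] using hlt
  · have hlen := hs.length_le
    simp only [List.length_append, List.length_singleton, length_toWord] at hlen
    have he := hs.eq_of_length (by simp [length_toWord]; omega)
    exact Or.inr (toWord_injective (List.append_inj he (by simp [length_toWord]; omega)).1.symm)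

lemma inSub_of_inSub_parent (hs : inSub v c (parent w)) : inSub v c w := by
  rw [inSub, toWord_parent] at hs
  exact hs.trans (List.dropLast_prefix _)

lemma inSub_parent_or_eq (hs : inSub v c w) : inSub v c (parent w) ∨ parent w = v := by
  rcases Nat.lt_or_ge (lvl v + 1) (lvl w) with hlt | hge
  · left
    rw [inSub, toWord_parent]
    refine List.prefix_of_prefix_length_le hs (List.dropLast_prefix _) ?_
    simp [length_toWord]; omega
  · have he : toWord v ++ [c] = toWord w :=
      hs.eq_of_length (by have := lvl_lt_of_inSub hs; simp [length_toWord]; omega)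
    exact Or.inr (toWord_injective (by rw [toWord_parent, ← he, List.dropLast_concat]))

end Subtree

section Antisymmetric

variable {d h : ℕ} (g : ℕ → ℂ) (v : Vtx d h) (c₁ c₂ : Fin d)

open Vtx

open scoped Classical in
noncomputable def antisymVec : Vtx d h → ℂ := fun w =>
  if inSub v c₁ w then g (lvl w - lvl v) else if inSub v c₂ w then -g (lvl w - lvl v) else 0

variable {g v c₁ c₂}

lemma antisymVec_of_inSub {w : Vtx d h} (hs : inSub v c₁ w) :
    antisymVec g v c₁ c₂ w = g (lvl w - lvl v) := by
  simp [antisymVec, hs]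

lemma antisymVec_of_not_inSub {w : Vtx d h} (h₁ : ¬ inSub v c₁ w) (h₂ : ¬ inSub v c₂ w) :
    antisymVec g v c₁ c₂ w = 0 := by
  simp [antisymVec, h₁, h₂]

lemma antisymVec_of_inSub_or_eq (hg : g 0 = 0) {w : Vtx d h} (hw : inSub v c₁ w ∨ w = v) :
    antisymVec g v c₁ c₂ w = g (lvl w - lvl v) := by
  rcases hw with hs | rfl
  · exact antisymVec_of_inSub hs
  · rw [antisymVec_of_not_inSub not_inSub_self not_inSub_self, Nat.sub_self, hg]

lemma antisymVec_swap (hne : c₁ ≠ c₂) : antisymVec g v c₂ c₁ = -antisymVec g v c₁ c₂ := by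
  funext w
  by_cases h₁ : inSub v c₁ w
  · have h₂ : ¬ inSub v c₂ w := fun h₂ => hne (eq_of_inSub_of_inSub h₁ h₂)
    simp [antisymVec, h₁, h₂]
  · by_cases h₂ : inSub v c₂ w <;> simp [antisymVec, h₁, h₂]

lemma antisymVec_ne_zero (hv : lvl v < h) (hg : g 1 ≠ 0) : antisymVec g v c₁ c₂ ≠ 0 := by
  intro hzero
  have hchild : antisymVec g v c₁ c₂ (child v c₁) = g 1 := by
    rw [antisymVec_of_inSub ((inSub_child_self_iff hv).2 rfl), lvl_child hv,
      Nat.add_sub_cancel_left]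
  rw [hzero] at hchild
  exact hg hchild.symm

lemma Q_mulVec_antisymVec_of_inSub (μ : ℂ) (hg : g 0 = 0)
    (hrec : ∀ i, i + 1 < h - lvl v → g i + d * g (i + 2) = μ * g (i + 1))
    (hleaf : g (h - lvl v - 1) + d * g (h - lvl v) = μ * g (h - lvl v))
    {w : Vtx d h} (hs : inSub v c₁ w) :
    (Q d h *ᵥ antisymVec g v c₁ c₂) w = μ / (d + 1) * antisymVec g v c₁ c₂ w := by
  have hval : ∀ u, inSub v c₁ u ∨ u = v → antisymVec g v c₁ c₂ u = g (lvl u - lvl v) :=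
    fun u hu => antisymVec_of_inSub_or_eq hg hu
  obtain ⟨i, hi⟩ : ∃ i, lvl w = lvl v + (i + 1) := ⟨lvl w - lvl v - 1, by
    have := lvl_lt_of_inSub hs; omega⟩
  rw [Q_mulVec_apply, if_pos (show 1 ≤ lvl w by omega), if_neg (show lvl w ≠ 0 by omega),
    hval _ (inSub_parent_or_eq hs), hval _ (Or.inl hs), lvl_parent,
    show lvl w - 1 - lvl v = i by omega, show lvl w - lvl v = i + 1 by omega]
  rcases (lvl_le w).lt_or_eq with hlt | hleaf_w
  · have hchild : ∀ a, antisymVec g v c₁ c₂ (child w a) = g (i + 2) := fun a => by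
      rw [hval _ (Or.inl (inSub_child hs hlt a)), lvl_child hlt]
      congr 1; omega
    simp only [if_pos hlt, if_neg hlt.ne, hchild, Finset.sum_const, Finset.card_univ,
      Fintype.card_fin, nsmul_eq_mul, add_zero]
    rw [hrec i (by omega)]
    ring
  · rw [if_neg hleaf_w.not_lt, if_pos hleaf_w,
      show i = h - lvl v - 1 by omega, show h - lvl v - 1 + 1 = h - lvl v by omega]
    linear_combination hleaf / ((d : ℂ) + 1)

lemma Q_mulVec_antisymVec_of_not_inSub (hne : c₁ ≠ c₂) {w : Vtx d h}
    (h₁ : ¬ inSub v c₁ w) (h₂ : ¬ inSub v c₂ w) : (Q d h *ᵥ antisymVec g v c₁ c₂) w = 0 := by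
  have hparent : antisymVec g v c₁ c₂ (parent w) = 0 :=
    antisymVec_of_not_inSub (mt inSub_of_inSub_parent h₁) (mt inSub_of_inSub_parent h₂)
  have hchildren : lvl w < h → ∑ a, antisymVec g v c₁ c₂ (child w a) = 0 := by
    intro hw
    by_cases hwv : w = v
    · subst hwv
      rw [Fintype.sum_eq_add c₁ c₂ hne fun a ha => antisymVec_of_not_inSub
          (mt (inSub_child_self_iff hw).1 ha.1) (mt (inSub_child_self_iff hw).1 ha.2),
        antisymVec_of_inSub ((inSub_child_self_iff hw).2 rfl)]
      simp [antisymVec, inSub_child_self_iff hw, hne.symm, lvl_child hw]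
    · refine Finset.sum_eq_zero fun a _ => antisymVec_of_not_inSub ?_ ?_ <;>
        exact fun hs => (inSub_or_eq_of_inSub_child hw hs).elim ‹_› hwv
  rw [Q_mulVec_apply, hparent, antisymVec_of_not_inSub h₁ h₂]
  by_cases hw : lvl w < h
  · simp [hw, hchildren hw]
  · simp [hw]

theorem Q_mulVec_antisymVec (μ : ℂ) (hne : c₁ ≠ c₂) (hg : g 0 = 0)
    (hrec : ∀ i, i + 1 < h - lvl v → g i + d * g (i + 2) = μ * g (i + 1))
    (hleaf : g (h - lvl v - 1) + d * g (h - lvl v) = μ * g (h - lvl v)) :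
    Q d h *ᵥ antisymVec g v c₁ c₂ = (μ / (d + 1)) • antisymVec g v c₁ c₂ := by
  funext w
  rw [Pi.smul_apply, smul_eq_mul]
  by_cases h₁ : inSub v c₁ w
  · exact Q_mulVec_antisymVec_of_inSub μ hg hrec hleaf h₁
  by_cases h₂ : inSub v c₂ w
  · rw [← neg_neg (antisymVec g v c₁ c₂), ← antisymVec_swap hne, mulVec_neg, Pi.neg_apply,
      Pi.neg_apply, Q_mulVec_antisymVec_of_inSub μ hg hrec hleaf h₂, mul_neg]
  rw [Q_mulVec_antisymVec_of_not_inSub hne h₁ h₂, antisymVec_of_not_inSub h₁ h₂, mul_zero]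

end Antisymmetric

section Profile

variable {d : ℕ} {x : ℂ}

-- `n ↦ yanti d x (n - 1)`, extended by `0` at `v` itself (`n = 0`); as a combination of `xⁿ` and
-- `(dx)⁻ⁿ`, the roots of `d r² - (dx + 1/x) r + 1`, it solves the interior recurrence for all `n`.
noncomputable def yantiShift (d : ℕ) (x : ℂ) (n : ℕ) : ℂ :=
  (d * x ^ (n + 1) - d * x / (d * x) ^ n) / (d * x ^ 2 - 1)

lemma yantiShift_zero : yantiShift d x 0 = 0 := by
  simp [yantiShift]

lemma yantiShift_succ (hdx : (d : ℂ) * x ≠ 0) (n : ℕ) : yantiShift d x (n + 1) = yanti d x n := by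
  have hd : (d : ℂ) ≠ 0 := left_ne_zero_of_mul hdx
  have hx : x ≠ 0 := right_ne_zero_of_mul hdx
  rw [yantiShift, yanti]
  field_simp
  ring

lemma yantiShift_one (hdx : (d : ℂ) * x ≠ 0) (hD : (d : ℂ) * x ^ 2 - 1 ≠ 0) :
    yantiShift d x 1 = 1 := by
  rw [yantiShift, div_eq_one_iff_eq hD, pow_one, div_self hdx]

lemma yantiShift_add_two (hdx : (d : ℂ) * x ≠ 0) (n : ℕ) :
    yantiShift d x n + d * yantiShift d x (n + 2)
      = (d * x + 1 / x) * yantiShift d x (n + 1) := by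
  have hd : (d : ℂ) ≠ 0 := left_ne_zero_of_mul hdx
  have hx : x ≠ 0 := right_ne_zero_of_mul hdx
  simp only [yantiShift]
  field_simp
  ring

lemma yantiShift_leaf (hdx : (d : ℂ) * x ≠ 0) {k : ℕ}
    (hsol : (d : ℂ) ^ (k + 2) * x ^ (2 * k + 4) - (d : ℂ) ^ (k + 2) * x ^ (2 * k + 3)
      + d * x - 1 = 0) :
    yantiShift d x k + d * yantiShift d x (k + 1)
      = (d * x + 1 / x) * yantiShift d x (k + 1) := by
  have hd : (d : ℂ) ≠ 0 := left_ne_zero_of_mul hdx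
  have hx : x ≠ 0 := right_ne_zero_of_mul hdx
  simp only [yantiShift]
  field_simp
  congr 1
  linear_combination (-x * (d * x) ^ k) * hsol

end Profile

lemma mul_sq_sub_one_ne_zero {a : ℝ} (ha : 0 ≤ a) {x : ℂ} (h₁ : x ≠ ((Real.sqrt a : ℝ) : ℂ)⁻¹)
    (h₂ : x ≠ -((Real.sqrt a : ℝ) : ℂ)⁻¹) : (a : ℂ) * x ^ 2 - 1 ≠ 0 := by
  intro h
  have ha0 : (a : ℂ) ≠ 0 := by rintro ha0; simp [ha0] at h
  have hsq : x ^ 2 = (((Real.sqrt a : ℝ) : ℂ)⁻¹) ^ 2 := by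
    rw [inv_pow, ← Complex.ofReal_pow, Real.sq_sqrt ha]
    field_simp
    linear_combination h
  rcases sq_eq_sq_iff_eq_or_eq_neg.1 hsq with h' | h'
  exacts [h₁ h', h₂ h']

lemma fantiX_eq_antisymVec {d h k : ℕ} {x : ℂ} (hdx : (d : ℂ) * x ≠ 0) {v : Vtx d h}
    (hv : lvl v + k + 1 = h) (c₁ c₂ : Fin d) :
    fantiX d h k x v c₁ c₂ = antisymVec (yantiShift d x) v c₁ c₂ := by
  funext w
  have hdepth : ∀ {c}, inSub v c w →
      yanti d x (lvl w + k - h) = yantiShift d x (lvl w - lvl v) := fun hs => by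
    rw [show lvl w - lvl v = lvl w + k - h + 1 by have := lvl_lt_of_inSub hs; omega,
      yantiShift_succ hdx]
  simp only [fantiX, antisymVec]
  split_ifs with h₁ h₂
  exacts [hdepth h₁, congrArg Neg.neg (hdepth h₂), rfl]

-- The children `j` and `j + 1` of `v` carry the labels `j - 1` and `j` of `Fin d`.
/-- For 0 ≤ k ≤ h−1, x ≠ ±1/√d solving the anti-symmetric equation, a vertex v of level
h−1−k and j ∈ {1,…,d−1} (children j, j+1 of v corresponding to labels j−1, j in `Fin d`),
the pseudo anti-symmetric vector is nonzero and satisfies `Q f = λ f` with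
λ = (d/(d+1))(x + 1/(xd)). -/
theorem stmt_4 (d h : ℕ) (hd : 2 ≤ d) (hh : 1 ≤ h) (k : ℕ) (hk : k ≤ h - 1) (x : ℂ)
    (hx1 : x ≠ ((Real.sqrt d : ℝ) : ℂ)⁻¹) (hx2 : x ≠ -((Real.sqrt d : ℝ) : ℂ)⁻¹)
    (hsol : (d : ℂ) ^ (k + 2) * x ^ (2 * k + 4) - (d : ℂ) ^ (k + 2) * x ^ (2 * k + 3)
      + d * x - 1 = 0)
    (v : Vtx d h) (hv : lvl v = h - 1 - k) (j : ℕ) (hj1 : 1 ≤ j) (hj2 : j ≤ d - 1) :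
    fantiX d h k x v ⟨j - 1, by omega⟩ ⟨j, by omega⟩ ≠ 0 ∧
    (Q d h).mulVec (fantiX d h k x v ⟨j - 1, by omega⟩ ⟨j, by omega⟩)
      = (((d : ℂ) / (d + 1)) * (x + 1 / (x * d)))
          • fantiX d h k x v ⟨j - 1, by omega⟩ ⟨j, by omega⟩ := by
  have hd0 : (d : ℂ) ≠ 0 := Nat.cast_ne_zero.2 (by omega)
  have hx0 : x ≠ 0 := by rintro rfl; simp at hsol
  have hdx : (d : ℂ) * x ≠ 0 := mul_ne_zero hd0 hx0
  have hD : (d : ℂ) * x ^ 2 - 1 ≠ 0 := by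
    simpa using mul_sq_sub_one_ne_zero (Nat.cast_nonneg d) hx1 hx2
  have hμ : (d : ℂ) / (d + 1) * (x + 1 / (x * d)) = (d * x + 1 / x) / (d + 1) := by
    field_simp
  rw [fantiX_eq_antisymVec hdx (by omega), hμ]
  refine ⟨antisymVec_ne_zero (by omega) (by simp [yantiShift_one hdx hD]),
    Q_mulVec_antisymVec _ (by simp; omega) yantiShift_zero
      (fun i _ => yantiShift_add_two hdx i) ?_⟩
  rw [show h - lvl v = k + 1 by omega, Nat.add_sub_cancel]
  exact yantiShift_leaf hdx hsol
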